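/- Let n and k be integers with 0 < k < n and k ≥ (n−1)/2, and let α and β be sequences in Z_n with |α| + |β| = n − 1 + k, L(α) < n and L(1 − β) < n. Let u and v denote the multiplicities of 1 and 0 in α ∪ β. Then the highest multiplicity of a term in α ∪ β equals max(u, v). -/
import Mathlib


/-- The least positive representative of `a : ZMod n`: the unique integer in `[1, n]`
congruent to `a` modulo `n`. -/
def lpr {n : ℕ} (a : ZMod n) : ℕ := if a = 0 then n else ZMod.val a

/-- `Lsum α` is the sum of the least positive representatives of the terms of `α`. -/
def Lsum {n : ℕ} (α : Multiset (ZMod n)) : ℕ := (α.map lpr).sum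

lemma Lsum_cons {n : ℕ} (a : ZMod n) (s : Multiset (ZMod n)) :
    Lsum (a ::ₘ s) = lpr a + Lsum s := by simp [Lsum]

lemma lpr_one_le {n : ℕ} (hn : 0 < n) (a : ZMod n) : 1 ≤ lpr a := by
  unfold lpr
  split
  · exact hn
  · have : NeZero n := ⟨hn.ne'⟩
    rename_i h
    have := (ZMod.val_eq_zero a).not.mpr h
    omega

lemma lpr_two_le {n : ℕ} (hn : 2 ≤ n) {a : ZMod n} (ha : a ≠ 1) : 2 ≤ lpr a := by
  unfold lpr
  split
  · exact hn
  · rename_i h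
    have : NeZero n := ⟨by omega⟩
    have h1 : a.val ≠ 0 := (ZMod.val_eq_zero a).not.mpr h
    have h2 : a.val ≠ 1 := by
      intro hv
      apply ha
      apply ZMod.val_injective
      rw [hv, ZMod.val_one_eq_one_mod, Nat.mod_eq_of_lt (by omega)]
    omega

lemma card_add_count_le_Lsum {n : ℕ} (hn : 2 ≤ n) (α : Multiset (ZMod n))
    {x : ZMod n} (hx : x ≠ 1) :
    Multiset.card α + α.count x ≤ Lsum α := by
  induction α using Multiset.induction with
  | empty => simp [Lsum]
  | cons a s ih =>
    rw [Lsum_cons, Multiset.count_cons, Multiset.card_cons]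
    by_cases h : a = x
    · subst h
      have := lpr_two_le hn hx
      simp
      omega
    · have := lpr_one_le (by omega : 0 < n) a
      simp [Ne.symm h]
      omega

lemma two_card_le {n : ℕ} (hn : 2 ≤ n) (α : Multiset (ZMod n)) :
    2 * Multiset.card α ≤ Lsum α + α.count 1 := by
  induction α using Multiset.induction with
  | empty => simp [Lsum]
  | cons a s ih =>
    rw [Lsum_cons, Multiset.count_cons, Multiset.card_cons]
    by_cases h : a = 1
    · subst h
      have := lpr_one_le (by omega : 0 < n) (1 : ZMod n)
      simp
      omega
    · have := lpr_two_le hn h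
      simp [h]
      omega

/-- With `|α| + |β| = n − 1 + k`, `0 < k < n`, `k ≥ (n−1)/2`, `L(α) < n`,
`L(1 − β) < n`, and `u`, `v` the multiplicities of `1` and `0` in `α ∪ β`: the highest
multiplicity of a term in `α ∪ β` equals `max(u, v)`. -/
theorem separable_highest_multiplicity (n k : ℕ) (hk : 0 < k) (hkn : k < n)
    (hk2 : n - 1 ≤ 2 * k)
    (α β : Multiset (ZMod n))
    (hlen : Multiset.card α + Multiset.card β = n - 1 + k)
    (hα : Lsum α < n) (hβ : Lsum (β.map (fun b => 1 - b)) < n)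
    (u v : ℕ) (hu : u = (α + β).count 1) (hv : v = (α + β).count 0) :
    IsGreatest {m : ℕ | ∃ x : ZMod n, (α + β).count x = m} (max u v) := by
  have hn2 : 2 ≤ n := by omega
  set β' := β.map (fun b => 1 - b) with hβ'
  have hinj : Function.Injective (fun b : ZMod n => 1 - b) := fun a b h => by
    simpa using sub_right_injective h
  have hcount : ∀ x : ZMod n, β'.count (1 - x) = β.count x := fun x =>
    Multiset.count_map_eq_count' _ _ hinj _
  have hcardβ' : Multiset.card β' = Multiset.card β := by simp [hβ']
  -- lower bounds for u and v
  have h1 : 2 * Multiset.card α ≤ Lsum α + α.count 1 := two_card_le hn2 α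
  have h2 : 2 * Multiset.card β ≤ Lsum β' + β.count 0 := by
    have := two_card_le hn2 β'
    rw [hcardβ'] at this
    have h0 : β'.count 1 = β.count 0 := by
      have := hcount 0; simpa using this
    omega
  have huv : u + v ≥ 2 * k := by
    have hu1 : u = α.count 1 + β.count 1 := by rw [hu, Multiset.count_add]
    have hv1 : v = α.count 0 + β.count 0 := by rw [hv, Multiset.count_add]
    omega
  constructor
  · rcases le_total u v with h | h
    · exact ⟨0, by omega⟩
    · exact ⟨1, by omega⟩
  · rintro m ⟨x, hx⟩
    by_cases hx1 : x = 1
    · have : m = u := by rw [hu, ← hx1, hx]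
      omega
    by_cases hx0 : x = 0
    · have : m = v := by rw [hv, ← hx0, hx]
      omega
    -- x ∉ {0, 1}
    have hA : Multiset.card α + α.count x ≤ Lsum α :=
      card_add_count_le_Lsum hn2 α hx1
    have hB : Multiset.card β + β.count x ≤ Lsum β' := by
      have hne : (1 : ZMod n) - x ≠ 1 := by
        intro h
        exact hx0 (sub_eq_self.mp h)
      have := card_add_count_le_Lsum hn2 β' hne
      rw [hcardβ', hcount x] at this
      exact this
    have hm : m = α.count x + β.count x := by rw [← hx, Multiset.count_add]
    omega
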